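/- Let k ∈ ℤ. For t = 1 and ε = −1, the system (S_k) admits a solution (a₁,a₂,a₃) with a₃ ≠ 0 if and only if k² > 1; in that case the solutions with a₃ ≠ 0 are exactly a₁ = a₂ = 0 and a₃ = ±√(k² − 1)/2. -/
import Mathlib


/-- The real system (S_k) characterizing deformed G₂-instantons of the form
A = π*A₀ + i(a₁η₁ + a₂η₂ + a₃η₃) on π*O(k) over the Aloff–Wallach space with
respect to φ_{t,ε}, where A₀ is the ASD instanton on O(k) with |F_{A₀}|² = 2k². -/
def Sk (k : ℤ) (t ε a₁ a₂ a₃ : ℝ) : Prop :=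
  (8 * (a₁ ^ 2 + a₂ ^ 2 + a₃ ^ 2) - 2 * (k : ℝ) ^ 2 - 2 * (1 - 2 * ε * t ^ 2)) * a₁ = 0 ∧
  (8 * (a₁ ^ 2 + a₂ ^ 2 + a₃ ^ 2) - 2 * (k : ℝ) ^ 2 - 2 * (1 - 2 * ε * t ^ 2)) * a₂ = 0 ∧
  (8 * (a₁ ^ 2 + a₂ ^ 2 + a₃ ^ 2) - 2 * (k : ℝ) ^ 2 - 2 * (1 - 2 * t ^ 2)) * a₃ = 0

/-- For t = 1, ε = −1 (the nearly parallel structure φ^{ts}), the system (S_k)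
admits a solution with a₃ ≠ 0 iff k² > 1; in that case the solutions with
a₃ ≠ 0 are exactly a₁ = a₂ = 0, a₃ = ±√(k² − 1)/2. -/
theorem stmt_8 (k : ℤ) :
    ((∃ a₁ a₂ a₃ : ℝ, a₃ ≠ 0 ∧ Sk k 1 (-1) a₁ a₂ a₃) ↔ 1 < (k : ℝ) ^ 2) ∧
    (1 < (k : ℝ) ^ 2 → ∀ a₁ a₂ a₃ : ℝ, a₃ ≠ 0 →
      (Sk k 1 (-1) a₁ a₂ a₃ ↔
        a₁ = 0 ∧ a₂ = 0 ∧
          (a₃ = Real.sqrt ((k : ℝ) ^ 2 - 1) / 2 ∨ a₃ = -(Real.sqrt ((k : ℝ) ^ 2 - 1) / 2)))) := by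
  constructor
  · constructor
    · rintro ⟨a₁, a₂, a₃, h₃, h1, h2, h3⟩
      have hco : 8 * (a₁ ^ 2 + a₂ ^ 2 + a₃ ^ 2) - 2 * (k : ℝ) ^ 2 - 2 * (1 - 2 * 1 ^ 2) = 0 := by
        rcases mul_eq_zero.mp h3 with h | h
        · exact h
        · exact absurd h h₃
      have hpos : 0 < a₃ ^ 2 := by positivity
      nlinarith [sq_nonneg a₁, sq_nonneg a₂]
    · intro hk
      refine ⟨0, 0, Real.sqrt ((k : ℝ) ^ 2 - 1) / 2, ?_, ?_, ?_, ?_⟩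
      · have : (0:ℝ) < Real.sqrt ((k : ℝ) ^ 2 - 1) := Real.sqrt_pos.mpr (by linarith)
        positivity
      · ring
      · ring
      · have hs : Real.sqrt ((k : ℝ) ^ 2 - 1) ^ 2 = (k : ℝ) ^ 2 - 1 :=
          Real.sq_sqrt (by linarith)
        linear_combination Real.sqrt ((k : ℝ) ^ 2 - 1) * hs
  · intro hk a₁ a₂ a₃ h₃
    have hs : Real.sqrt ((k : ℝ) ^ 2 - 1) ^ 2 = (k : ℝ) ^ 2 - 1 :=
      Real.sq_sqrt (by linarith)
    constructor
    · rintro ⟨h1, h2, h3⟩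
      have hco : 8 * (a₁ ^ 2 + a₂ ^ 2 + a₃ ^ 2) - 2 * (k : ℝ) ^ 2 - 2 * (1 - 2 * 1 ^ 2) = 0 := by
        rcases mul_eq_zero.mp h3 with h | h
        · exact h
        · exact absurd h h₃
      have ha₁ : a₁ = 0 := by
        rcases mul_eq_zero.mp h1 with h | h
        · nlinarith [hco]
        · exact h
      have ha₂ : a₂ = 0 := by
        rcases mul_eq_zero.mp h2 with h | h
        · nlinarith [hco]
        · exact h
      refine ⟨ha₁, ha₂, ?_⟩
      have hfac : (a₃ - Real.sqrt ((k : ℝ) ^ 2 - 1) / 2) *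
          (a₃ + Real.sqrt ((k : ℝ) ^ 2 - 1) / 2) = 0 := by
        subst ha₁ ha₂; nlinarith [hs, hco]
      rcases mul_eq_zero.mp hfac with h | h
      · left; linarith
      · right; linarith
    · rintro ⟨rfl, rfl, h | h⟩ <;> subst h
      · exact ⟨by ring, by ring, by linear_combination Real.sqrt ((k : ℝ) ^ 2 - 1) * hs⟩
      · exact ⟨by ring, by ring, by linear_combination -Real.sqrt ((k : ℝ) ^ 2 - 1) * hs⟩
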